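/- Let S be a finite set of m ≥ 2 points in a real inner product space with centroid c, and let x ∈ S. Then ∑_{y ∈ S \ {x}} ‖y − c'‖² = ∑_{y ∈ S} ‖y − c‖² − (m/(m−1)) ‖x − c‖², where c' is the centroid of S \ {x}. -/

import Mathlib

/-!
Since the displacements from the centroid sum to zero, the parallel axis theorem
`∑_{y ∈ T} ‖y - p‖² = ∑_{y ∈ T} ‖y - c(T)‖² + |T| ‖c(T) - p‖²` holds. Removing `x` moves the
centroid by `c' - c = (c - x)/(m - 1)`. Applying the parallel axis theorem to `S \ {x}` with
`p = c`, the cost drops by `‖x - c‖²` for the removed point and by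
`(m - 1)‖c' - c‖² = ‖x - c‖²/(m - 1)` for re-centring.
-/

variable {E : Type*} [NormedAddCommGroup E] [InnerProductSpace ℝ E]

/-- The centroid (arithmetic mean) of a finite set of points. -/
noncomputable def centroid (S : Finset E) : E :=
  (S.card : ℝ)⁻¹ • ∑ y ∈ S, y

open Finset

theorem card_smul_centroid (T : Finset E) : (#T : ℝ) • centroid T = ∑ y ∈ T, y := by
  rcases T.eq_empty_or_nonempty with rfl | hT
  · simp
  · exact smul_inv_smul₀ (Nat.cast_ne_zero.mpr hT.card_ne_zero) _

theorem sum_sub_eq_card_smul_centroid_sub (T : Finset E) (p : E) :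
    ∑ y ∈ T, (y - p) = (#T : ℝ) • (centroid T - p) := by
  rw [sum_sub_distrib, sum_const, smul_sub, card_smul_centroid, Nat.cast_smul_eq_nsmul]

theorem sum_sub_centroid (T : Finset E) : ∑ y ∈ T, (y - centroid T) = 0 := by
  rw [sum_sub_eq_card_smul_centroid_sub, sub_self, smul_zero]

theorem sum_norm_sub_sq_eq_add (T : Finset E) (p : E) :
    ∑ y ∈ T, ‖y - p‖ ^ 2 =
      ∑ y ∈ T, ‖y - centroid T‖ ^ 2 + #T * ‖centroid T - p‖ ^ 2 := by
  set c := centroid T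
  have cross : ∑ y ∈ T, inner ℝ (y - c) (c - p) = 0 := by
    rw [← sum_inner, sum_sub_centroid, inner_zero_left]
  calc ∑ y ∈ T, ‖y - p‖ ^ 2
      = ∑ y ∈ T, (‖y - c‖ ^ 2 + 2 * inner ℝ (y - c) (c - p) + ‖c - p‖ ^ 2) := by
        refine sum_congr rfl fun y _ => ?_
        rw [← norm_add_sq_real, sub_add_sub_cancel]
    _ = ∑ y ∈ T, ‖y - c‖ ^ 2 + #T * ‖c - p‖ ^ 2 := by
        rw [sum_add_distrib, sum_add_distrib, ← mul_sum, cross, sum_const, nsmul_eq_mul]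
        ring

theorem card_sub_one_smul_centroid_erase_sub [DecidableEq E] {S : Finset E} {x : E}
    (hx : x ∈ S) :
    ((#S : ℝ) - 1) • (centroid (S.erase x) - centroid S) = centroid S - x := by
  have hsplit := add_sum_erase S (fun y => y - centroid S) hx
  rw [sum_sub_centroid, sum_sub_eq_card_smul_centroid_sub, card_erase_of_mem hx,
    Nat.cast_pred (card_pos.mpr ⟨x, hx⟩)] at hsplit
  rw [eq_neg_of_add_eq_zero_right hsplit, neg_sub]

/-- Removing a point `x` from a cluster `S` of `m ≥ 2` points with centroid `c`
decreases the squared-Euclidean cluster cost by exactly `(m/(m−1))‖x − c‖²`. -/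
theorem cost_erase [DecidableEq E]
    (S : Finset E) (m : ℕ) (hm : S.card = m) (hm' : 2 ≤ m) (x : E) (hx : x ∈ S) :
    ∑ y ∈ S.erase x, ‖y - centroid (S.erase x)‖ ^ 2 =
      ∑ y ∈ S, ‖y - centroid S‖ ^ 2 -
        (m : ℝ) / ((m : ℝ) - 1) * ‖x - centroid S‖ ^ 2 := by
  set c := centroid S
  set c' := centroid (S.erase x)
  have hm1 : (m : ℝ) - 1 ≠ 0 := by
    have : (2 : ℝ) ≤ m := by exact_mod_cast hm'
    linarith
  have hcard : (#(S.erase x) : ℝ) = m - 1 := by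
    rw [card_erase_of_mem hx, hm, Nat.cast_pred (by omega)]
  have hshift : ‖c' - c‖ ^ 2 = ‖x - c‖ ^ 2 / ((m : ℝ) - 1) ^ 2 := by
    have h : ((m : ℝ) - 1) • (c' - c) = c - x := hm ▸ card_sub_one_smul_centroid_erase_sub hx
    rw [← inv_smul_smul₀ hm1 (c' - c), h, norm_smul, norm_inv, Real.norm_eq_abs, mul_pow,
      inv_pow, sq_abs, norm_sub_rev, inv_mul_eq_div]
  have hrest : ∑ y ∈ S.erase x, ‖y - c‖ ^ 2 = ∑ y ∈ S, ‖y - c‖ ^ 2 - ‖x - c‖ ^ 2 :=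
    eq_sub_of_add_eq' (add_sum_erase S (fun y => ‖y - c‖ ^ 2) hx)
  have hparallel := sum_norm_sub_sq_eq_add (S.erase x) c
  rw [hrest, hcard, hshift] at hparallel
  rw [eq_sub_of_add_eq hparallel.symm]
  field_simp
  ring
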